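/- Let b with 1/2 < b ≤ 3/4. Then for all real ξ₃ with |ξ₃| ≥ 1 and all real L₃, |ξ₃|^{3/2} / (⟨L₃⟩^{2−2b} ⟨L₃ + (3/4)ξ₃³⟩^{1/2}) ≤ C for an absolute constant C. -/

import Mathlib

/-!
Since `2 - 2b ≥ 1/2` and `⟨L⟩ ≥ 1`, the denominator is at least `(⟨L⟩ ⟨L + ¾ξ³⟩)^{1/2}`, and a product
`⟨a⟩ ⟨b⟩` of Japanese brackets dominates `|a - b| / 2`. Applied to `a = L + ¾ξ³`, `b = L` this bounds
the denominator below by a multiple of `|ξ|^{3/2}`.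
-/

open Real

noncomputable def japaneseBracket (x : ℝ) : ℝ := √(1 + x ^ 2)

-- The paper's `⟨x⟩`; those brackets are taken by anonymous constructors.
local notation "⟪" x "⟫" => japaneseBracket x

lemma japaneseBracket_nonneg (x : ℝ) : 0 ≤ ⟪x⟫ := sqrt_nonneg _

lemma one_le_japaneseBracket (x : ℝ) : 1 ≤ ⟪x⟫ :=
  one_le_sqrt.mpr (by nlinarith [sq_nonneg x])

lemma sq_japaneseBracket (x : ℝ) : ⟪x⟫ ^ 2 = 1 + x ^ 2 := sq_sqrt (by positivity)

lemma abs_sub_le_two_mul_japaneseBracket_mul (a b : ℝ) : |a - b| ≤ 2 * (⟪a⟫ * ⟪b⟫) := by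
  refine abs_le_of_sq_le_sq ?_ <|
    mul_nonneg zero_le_two (mul_nonneg (japaneseBracket_nonneg a) (japaneseBracket_nonneg b))
  rw [mul_pow, mul_pow, sq_japaneseBracket, sq_japaneseBracket]
  nlinarith [sq_nonneg (a + b), sq_nonneg (a * b)]

lemma abs_rpow_three_halves_le (b ξ L : ℝ) (hb : b ≤ 3 / 4) :
    |ξ| ^ ((3 : ℝ) / 2) ≤ 2 * (⟪L⟫ ^ (2 - 2 * b) * ⟪L + 3 / 4 * ξ ^ 3⟫ ^ ((1 : ℝ) / 2)) := by
  have hcube : |ξ| ^ 3 ≤ 4 * (⟪L⟫ * ⟪L + 3 / 4 * ξ ^ 3⟫) := by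
    have := abs_sub_le_two_mul_japaneseBracket_mul (L + 3 / 4 * ξ ^ 3) L
    rw [add_sub_cancel_left, abs_mul, abs_pow, abs_of_pos (by norm_num : (0 : ℝ) < 3 / 4)] at this
    nlinarith [japaneseBracket_nonneg L, japaneseBracket_nonneg (L + 3 / 4 * ξ ^ 3)]
  have hL := one_le_japaneseBracket L
  calc |ξ| ^ ((3 : ℝ) / 2) = √(|ξ| ^ 3) := by
        rw [sqrt_eq_rpow, ← rpow_natCast, ← rpow_mul (abs_nonneg ξ)]
        norm_num
    _ ≤ √(4 * (⟪L⟫ * ⟪L + 3 / 4 * ξ ^ 3⟫)) := sqrt_le_sqrt hcube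
    _ = 2 * (⟪L⟫ ^ ((1 : ℝ) / 2) * ⟪L + 3 / 4 * ξ ^ 3⟫ ^ ((1 : ℝ) / 2)) := by
        rw [sqrt_mul (by norm_num), sqrt_mul (japaneseBracket_nonneg L),
          show √(4 : ℝ) = 2 by rw [show (4 : ℝ) = 2 * 2 by norm_num, sqrt_mul_self zero_le_two],
          sqrt_eq_rpow, sqrt_eq_rpow]
    _ ≤ 2 * (⟪L⟫ ^ (2 - 2 * b) * ⟪L + 3 / 4 * ξ ^ 3⟫ ^ ((1 : ℝ) / 2)) := by
        have := japaneseBracket_nonneg (L + 3 / 4 * ξ ^ 3)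
        gcongr
        linarith

theorem stmt_11 :
    ∃ C : ℝ, 0 < C ∧ ∀ b : ℝ, 1 / 2 < b → b ≤ 3 / 4 →
      ∀ ξ₃ L₃ : ℝ, 1 ≤ |ξ₃| →
        |ξ₃| ^ ((3 : ℝ) / 2)
            / ((Real.sqrt (1 + L₃ ^ 2)) ^ (2 - 2 * b)
              * (Real.sqrt (1 + (L₃ + (3 / 4) * ξ₃ ^ 3) ^ 2)) ^ ((1 : ℝ) / 2))
          ≤ C := by
  refine ⟨2, two_pos, fun b _ hb ξ L _ => div_le_of_le_mul₀ ?_ zero_le_two ?_⟩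
  · positivity
  · exact abs_rpow_three_halves_le b ξ L hb
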